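/- Suppose v_max > 1+2v_min and α* < α ≤ α_s, where α* := (v_max − v_min)/(|v_min|(1+v_max)²) and α_s := 1/(4|v_min|(1+v_min)). Then there exists K such that X(v*,k) < 0 for all k ≥ K. -/

import Mathlib

/-- Account value `X(v,k)` for feedback gain `α`, initial value `X0`, path `v`. -/
noncomputable def accountX (α X0 : ℝ) (v : ℕ → ℝ) : ℕ → ℝ
  | 0 => X0
  | 1 => X0
  | (k + 2) => accountX α X0 v (k + 1) + α * (1 + v k) * v (k + 1) * accountX α X0 v k

/-- The distinguished path: `v*(0) = v_max` and `v*(k) = v_min` for `k ≥ 1`. -/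
noncomputable def vstar (vmin vmax : ℝ) : ℕ → ℝ := fun k => if k = 0 then vmax else vmin

/-!
From `k = 1` on, the account value along `v*` obeys the constant-coefficient recurrence
`X(k+2) = X(k+1) - c X(k)` with `c = α|v_min|(1+v_min) ≤ 1/4`, so its characteristic roots
`p ≤ q` are real, nonnegative and `p + q = 1`. Hence `X(k+1) - p X(k) = q^(k-1) (X(2) - p X(1))`,
where `X(2) - p X(1) = (q - a) X_0` with `a = α|v_min|(1+v_max)`. The bound `α* < α` says exactly
that `a² - a + c > 0`, i.e. `a ∉ [p, q]`, and `v_max > 1 + 2 v_min` gives `a > 1/2`, so `a > q`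
and the forcing term is negative. After division by `q^k`, `X(k)/q^k` decreases at least linearly
while `X` stays positive, so `X` reaches a nonpositive value, after which it stays negative.
-/

open Filter

section Recurrence
variable {p q r z : ℝ} {x : ℕ → ℝ}

theorem sub_mul_eq_pow_mul_of_recurrence
    (h : ∀ n, x (n + 2) = (p + q) * x (n + 1) - p * q * x n) (n : ℕ) :
    x (n + 1) - p * x n = q ^ n * (x 1 - p * x 0) := by
  induction n with
  | zero => simp
  | succ n ih => linear_combination h n + q * ih

theorem exists_nonpos_of_eq_mul_add_pow (hqr : q ≤ r) (hr : 0 < r)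
    (hz : z < 0) (h : ∀ n, x (n + 1) = q * x n + r ^ n * z) : ∃ n, x n ≤ 0 := by
  by_contra! hpos
  have hbound (n : ℕ) : r * x n ≤ r ^ n * (r * x 0 + n * z) := by
    induction n with
    | zero => simp
    | succ n ih =>
      have hstep : x (n + 1) ≤ r * x n + r ^ n * z := by
        rw [h]; gcongr; exact (hpos n).le
      calc r * x (n + 1) ≤ r * (r * x n + r ^ n * z) := by gcongr
        _ = r * (r * x n) + r ^ (n + 1) * z := by ring
        _ ≤ r * (r ^ n * (r * x 0 + n * z)) + r ^ (n + 1) * z := by gcongr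
        _ = r ^ (n + 1) * (r * x 0 + (n + 1 : ℕ) * z) := by push_cast; ring
  obtain ⟨n, hn⟩ := exists_nat_gt (r * x 0 / -z)
  have hneg : r * x 0 + n * z < 0 := by
    rw [div_lt_iff₀ (neg_pos.2 hz)] at hn; linarith
  exact (mul_pos hr (hpos n)).not_ge
    ((hbound n).trans (mul_neg_of_pos_of_neg (pow_pos hr n) hneg).le)

theorem eventually_neg_of_eq_mul_add_pow (hq : 0 ≤ q) (hqr : q ≤ r)
    (hr : 0 < r) (hz : z < 0) (h : ∀ n, x (n + 1) = q * x n + r ^ n * z) :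
    ∀ᶠ n in atTop, x n < 0 := by
  have hstep (n : ℕ) (hn : x n ≤ 0) : x (n + 1) < 0 := by
    rw [h]
    linarith [mul_nonpos_of_nonneg_of_nonpos hq hn, mul_neg_of_pos_of_neg (pow_pos hr n) hz]
  obtain ⟨N, hN⟩ := exists_nonpos_of_eq_mul_add_pow hqr hr hz h
  refine eventually_atTop.2 ⟨N + 1, fun n hn => ?_⟩
  induction n, hn using Nat.le_induction with
  | base => exact hstep N hN
  | succ n _ ih => exact hstep n ih.le

theorem eventually_neg_of_recurrence (hp : 0 ≤ p) (hpq : p ≤ q)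
    (hq : 0 < q) (h : ∀ n, x (n + 2) = (p + q) * x (n + 1) - p * q * x n)
    (h1 : x 1 < p * x 0) : ∀ᶠ n in atTop, x n < 0 :=
  eventually_neg_of_eq_mul_add_pow hp hpq hq (sub_neg.2 h1) fun n => by
    linear_combination sub_mul_eq_pow_mul_of_recurrence h n

end Recurrence

theorem exists_add_eq_one_mul_eq {c : ℝ} (hc0 : 0 ≤ c) (hc : c ≤ 1 / 4) :
    ∃ p q : ℝ, 0 ≤ p ∧ p ≤ q ∧ p + q = 1 ∧ p * q = c := by
  have hs : √(1 - 4 * c) ^ 2 = 1 - 4 * c := Real.sq_sqrt (by linarith)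
  have hs1 : √(1 - 4 * c) ≤ 1 := Real.sqrt_le_one.mpr (by linarith)
  refine ⟨(1 - √(1 - 4 * c)) / 2, (1 + √(1 - 4 * c)) / 2, by linarith, ?_, by ring,
    by linear_combination -hs / 4⟩
  linarith [Real.sqrt_nonneg (1 - 4 * c)]

theorem lt_of_add_eq_one_of_sq_sub_add_mul_pos {p q a : ℝ} (hpq : p ≤ q) (hsum : p + q = 1)
    (ha : 1 / 2 ≤ a) (h : 0 < a ^ 2 - a + p * q) : q < a := by
  nlinarith

section vstar
variable (α X0 vmin vmax : ℝ)

theorem accountX_vstar_two :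
    accountX α X0 (vstar vmin vmax) 2 = (1 + α * (1 + vmax) * vmin) * X0 := by
  simp [accountX, vstar]; ring

theorem accountX_vstar_add_three (n : ℕ) :
    accountX α X0 (vstar vmin vmax) (n + 3) =
      accountX α X0 (vstar vmin vmax) (n + 2) +
        α * (1 + vmin) * vmin * accountX α X0 (vstar vmin vmax) (n + 1) := by
  simp [accountX, vstar]

end vstar

theorem distinguished_path_eventually_negative_general (vmin vmax α X0 : ℝ)
    (h1 : -1 < vmin) (h2 : vmin < 0) (hX0 : 0 < X0)
    (hgap : vmax > 1 + 2 * vmin)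
    (hαlo : (vmax - vmin) / (|vmin| * (1 + vmax) ^ 2) < α)
    (hαhi : α ≤ 1 / (4 * |vmin| * (1 + vmin))) :
    ∃ K, ∀ k ≥ K, accountX α X0 (vstar vmin vmax) k < 0 := by
  rw [abs_of_neg h2] at hαlo hαhi
  set X := accountX α X0 (vstar vmin vmax)
  have hvmin : 0 < -vmin := neg_pos.2 h2
  have hvmax : 0 < 1 + vmax := by linarith
  have hα : 0 < α := (div_nonneg (by linarith) (by positivity)).trans_lt hαlo
  have hαlo' := (div_lt_iff₀ (by positivity)).1 hαlo
  have hαhi' := (le_div_iff₀ (by nlinarith)).1 hαhi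
  obtain ⟨p, q, hp, hpq, hsum, hprod⟩ :=
    exists_add_eq_one_mul_eq (c := α * -vmin * (1 + vmin))
      (mul_pos (mul_pos hα hvmin) (by linarith)).le (by linarith)
  have hqa : q < α * -vmin * (1 + vmax) := by
    refine lt_of_add_eq_one_of_sq_sub_add_mul_pos hpq hsum (by nlinarith) ?_
    calc 0 < α * -vmin * (α * (-vmin * (1 + vmax) ^ 2) - (vmax - vmin)) :=
          mul_pos (mul_pos hα hvmin) (sub_pos.2 hαlo')
      _ = _ := by rw [hprod]; ring
  have hy : ∀ᶠ n in atTop, X (n + 1) < 0 := by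
    refine eventually_neg_of_recurrence hp hpq (by linarith) (fun n => ?_) ?_
    · linear_combination accountX_vstar_add_three α X0 vmin vmax n + X (n + 1) * hprod
        - X (n + 2) * hsum
    · calc X 2 = (1 + α * (1 + vmax) * vmin) * X0 := accountX_vstar_two α X0 vmin vmax
        _ < p * X0 := mul_lt_mul_of_pos_right (by linarith) hX0
  obtain ⟨N, hN⟩ := eventually_atTop.1 hy
  refine ⟨N + 1, fun k hk => ?_⟩
  obtain ⟨j, rfl⟩ := Nat.exists_eq_add_of_le' hk
  exact hN (j + N) (Nat.le_add_left N j)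

/-- Lemma 2(b): if `v_max > 1 + 2 v_min` and `α* < α ≤ α_s`, then `X(v*,k)` is
negative for all sufficiently large `k`. -/
theorem distinguished_path_eventually_negative (vmin vmax α X0 : ℝ)
    (h1 : -1 < vmin) (h2 : vmin < 0) (h3 : 0 < vmax) (hX0 : 0 < X0)
    (hgap : vmax > 1 + 2 * vmin)
    (hαlo : (vmax - vmin) / (|vmin| * (1 + vmax) ^ 2) < α)
    (hαhi : α ≤ 1 / (4 * |vmin| * (1 + vmin))) :
    ∃ K, ∀ k ≥ K, accountX α X0 (vstar vmin vmax) k < 0 :=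
  distinguished_path_eventually_negative_general vmin vmax α X0 h1 h2 hX0 hgap hαlo hαhi
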